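/- Let a > 1, p prime, and n ≥ 1, and set N = (a^(p^n) − 1)/(a^(p^(n−1)) − 1). Then N is primover to base a (every divisor d > 1 of N satisfies ord_d(a) = p^n) if and only if gcd(N, a^(p^(n−1)) − 1) = 1. -/

import Mathlib

/-!
Every divisor `d` of `N` divides `a^(p^n) - 1`, so `ord_d(a)` divides `p^n`, and it equals `p^n`
exactly when `a^(p^(n-1)) ≢ 1 (mod d)`. Hence every `d > 1` dividing `N` has full order iff no
`d > 1` divides both `N` and `a^(p^(n-1)) - 1`.
-/

theorem Nat.coprime_iff_forall_dvd_not_dvd {m n : ℕ} :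
    Nat.Coprime m n ↔ ∀ d, d ∣ m → 1 < d → ¬d ∣ n :=
  ⟨fun h _ hm hd hn => hd.ne' (Nat.eq_one_of_dvd_coprimes h hm hn),
    fun h => Nat.coprime_of_dvd fun k hk hkm => h k hkm hk.one_lt⟩

theorem ZMod.natCast_pow_eq_one_iff_dvd {a : ℕ} (ha : 0 < a) (d k : ℕ) :
    (a : ZMod d) ^ k = 1 ↔ d ∣ a ^ k - 1 := by
  rw [← Nat.cast_pow, ← ZMod.natCast_eq_zero_iff, Nat.cast_sub (Nat.one_le_pow k a ha),
    Nat.cast_one, sub_eq_zero]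

theorem orderOf_eq_prime_pow_succ_iff {G : Type*} [Monoid G] {x : G} {p n : ℕ}
    [Fact p.Prime] (hfin : x ^ p ^ (n + 1) = 1) :
    orderOf x = p ^ (n + 1) ↔ ¬x ^ p ^ n = 1 := by
  refine ⟨fun h => pow_ne_one_of_lt_orderOf (pow_ne_zero n (Fact.out : p.Prime).ne_zero) ?_,
    fun h => orderOf_eq_prime_pow h hfin⟩
  rw [h]
  exact Nat.pow_lt_pow_right (Fact.out : p.Prime).one_lt n.lt_succ_self

/-- For `a > 1`, `p` prime and `n ≥ 1`, the integer
`N = (a^(p^n)-1)/(a^(p^(n-1))-1)` is primover to base `a` (every divisor `d > 1` of `N`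
has `ord_d(a) = p^n`) iff `gcd(N, a^(p^(n-1)) - 1) = 1`. -/
theorem primover_prime_power_iff (a p n N : ℕ) (ha : 1 < a) (hp : p.Prime)
    (hn : 1 ≤ n)
    (hN : N * (a ^ p ^ (n - 1) - 1) = a ^ p ^ n - 1) :
    (∀ d, d ∣ N → 1 < d → orderOf (a : ZMod d) = p ^ n) ↔
      Nat.Coprime N (a ^ p ^ (n - 1) - 1) := by
  obtain ⟨m, rfl⟩ := Nat.exists_eq_add_of_le' hn
  have : Fact p.Prime := ⟨hp⟩
  have ha₀ : 0 < a := by omega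
  rw [Nat.add_sub_cancel] at hN ⊢
  rw [Nat.coprime_iff_forall_dvd_not_dvd]
  refine forall_congr' fun d => imp_congr_right fun hd => imp_congr_right fun _ => ?_
  have hfin : (a : ZMod d) ^ p ^ (m + 1) = 1 :=
    (ZMod.natCast_pow_eq_one_iff_dvd ha₀ _ _).mpr (hN ▸ hd.mul_right _)
  rw [orderOf_eq_prime_pow_succ_iff hfin, ZMod.natCast_pow_eq_one_iff_dvd ha₀]
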